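/- arXiv:1910.04216 — 6 statements merged into one kernel-verified Lean document; each statement's English description precedes it below -/
import Mathlib

section
/- Define N φ := φ R_(0,∞) φ. For every signal f and every MTL formula φ: (a) f ⊨ N φ (new semantics) if and only if there exists ε > 0 such that f^t ⊨ φ for all t ∈ (0,ε); and (b) f ⊨old N φ (old semantics) if and only if there exists ε > 0 such that f^t ⊨old φ for all t ∈ (0,ε). -/
open scoped NNReal
open Set

namespace MITL

/-- A signal assigns to each nonnegative real time the set of atomic
propositions true at that time. -/
abbrev Signal (AP : Type*) := ℝ≥0 → Set AP

/-- The shifted signal `f^r`, defined by `f^r(t) = f(r+t)`. -/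
def shift {AP : Type*} (f : Signal AP) (r : ℝ≥0) : Signal AP := fun t => f (r + t)

/-- MTL formulas over atomic propositions `AP`; the timing constraints are
(intended to be) intervals of nonnegative reals. -/
inductive MTL (AP : Type*) where
  | top : MTL AP
  | bot : MTL AP
  | atom : AP → MTL AP
  | neg : MTL AP → MTL AP
  | disj : MTL AP → MTL AP → MTL AP
  | conj : MTL AP → MTL AP → MTL AP
  | until_ : MTL AP → MTL AP → Set ℝ≥0 → MTL AP
  | release : MTL AP → MTL AP → Set ℝ≥0 → MTL AP

variable {AP : Type*}

/-- The NEW satisfaction relation: `NSat f φ` means `f ⊨ φ`. -/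
def NSat : Signal AP → MTL AP → Prop
  | _, .top => True
  | _, .bot => False
  | f, .atom p => p ∈ f 0
  | f, .neg φ => ¬ NSat f φ
  | f, .disj φ1 φ2 => NSat f φ1 ∨ NSat f φ2
  | f, .conj φ1 φ2 => NSat f φ1 ∧ NSat f φ2
  | f, .until_ φ1 φ2 I =>
      ∃ t1 ∈ I, NSat (shift f t1) φ2 ∧ ∀ t2 ∈ Set.Ioo 0 t1, NSat (shift f t2) φ1
  | f, .release φ1 φ2 I =>
      (∀ t1 ∈ I, NSat (shift f t1) φ2) ∨
      (∃ t1 : ℝ≥0, 0 < t1 ∧ NSat (shift f t1) φ1 ∧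
        ∀ t2 ∈ Set.Ioc 0 t1 ∩ I, NSat (shift f t2) φ2) ∨
      (∃ t1 ∈ I ∪ {sInf I}, ∃ t2 ∈ I, t1 < t2 ∧
        ∀ t3 ∈ I, (t3 ≤ t1 → NSat (shift f t3) φ2) ∧
          (t1 < t3 → t3 ≤ t2 → NSat (shift f t3) φ1))

/-- Finite variability from the right of a signal `f` with respect to a formula
`φ`, relative to a satisfaction relation `Sat`. -/
def FinVarRight (Sat : Signal AP → MTL AP → Prop) (f : Signal AP) (φ : MTL AP) : Prop :=
  ∀ r : ℝ≥0,
    (∀ ε : ℝ≥0, 0 < ε → ∃ t ∈ Set.Ioo r (r + ε), Sat (shift f t) φ) →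
    ∃ ε : ℝ≥0, 0 < ε ∧ ∀ t ∈ Set.Ioo r (r + ε), Sat (shift f t) φ

/-- Finite variability from the left of a signal `f` with respect to a formula
`φ`, relative to a satisfaction relation `Sat`. -/
def FinVarLeft (Sat : Signal AP → MTL AP → Prop) (f : Signal AP) (φ : MTL AP) : Prop :=
  ∀ r : ℝ≥0, 0 < r →
    (∀ ε ∈ Set.Ioo 0 r, ∃ t ∈ Set.Ioo (r - ε) r, Sat (shift f t) φ) →
    ∃ ε ∈ Set.Ioo 0 r, ∀ t ∈ Set.Ioo (r - ε) r, Sat (shift f t) φ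

/-- The OLD satisfaction relation: `OSat f φ` means `f ⊨old φ`. -/
def OSat : Signal AP → MTL AP → Prop
  | _, .top => True
  | _, .bot => False
  | f, .atom p => p ∈ f 0
  | f, .neg φ => ¬ OSat f φ
  | f, .disj φ1 φ2 => OSat f φ1 ∨ OSat f φ2
  | f, .conj φ1 φ2 => OSat f φ1 ∧ OSat f φ2
  | f, .until_ φ1 φ2 I =>
      ∃ t1 ∈ I, OSat (shift f t1) φ2 ∧ ∀ t2 ∈ Set.Ioo 0 t1, OSat (shift f t2) φ1
  | f, .release φ1 φ2 I =>
      (∀ t1 ∈ I, OSat (shift f t1) φ2) ∨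
      (∃ t1 : ℝ≥0, 0 < t1 ∧ OSat (shift f t1) φ1 ∧
        ∀ t2 ∈ Set.Ioc 0 t1 ∩ I, OSat (shift f t2) φ2)

/-- The defined operator `N φ := φ R_(0,∞) φ`. -/
def Next (φ : MTL AP) : MTL AP := .release φ φ (Set.Ioi 0)

theorem next_characterization (f : Signal AP) (φ : MTL AP) :
    (NSat f (Next φ) ↔ ∃ ε : ℝ≥0, 0 < ε ∧ ∀ t ∈ Set.Ioo 0 ε, NSat (shift f t) φ) ∧
    (OSat f (Next φ) ↔ ∃ ε : ℝ≥0, 0 < ε ∧ ∀ t ∈ Set.Ioo 0 ε, OSat (shift f t) φ) := by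
  constructor
  · constructor
    · intro h
      simp only [Next, NSat] at h
      rcases h with h | ⟨t1, ht1, hφ, hall⟩ | ⟨t1, -, t2, ht2, -, hall⟩
      · exact ⟨1, one_pos, fun t ht => h t ht.1⟩
      · exact ⟨t1, ht1, fun t ht => hall t ⟨⟨ht.1, ht.2.le⟩, ht.1⟩⟩
      · refine ⟨t2, ht2, fun t ht => ?_⟩
        rcases le_or_gt t t1 with h' | h'
        · exact (hall t ht.1).1 h'
        · exact (hall t ht.1).2 h' ht.2.le
    · rintro ⟨ε, hε, hall⟩
      simp only [Next, NSat]
      right; left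
      refine ⟨ε / 2, by positivity,
        hall _ ⟨by positivity, NNReal.half_lt_self hε.ne'⟩, ?_⟩
      rintro t ⟨⟨ht0, htε⟩, -⟩
      exact hall t ⟨ht0, lt_of_le_of_lt htε (NNReal.half_lt_self hε.ne')⟩
  · constructor
    · intro h
      simp only [Next, OSat] at h
      rcases h with h | ⟨t1, ht1, hφ, hall⟩
      · exact ⟨1, one_pos, fun t ht => h t ht.1⟩
      · exact ⟨t1, ht1, fun t ht => hall t ⟨⟨ht.1, ht.2.le⟩, ht.1⟩⟩
    · rintro ⟨ε, hε, hall⟩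
      simp only [Next, OSat]
      right
      refine ⟨ε / 2, by positivity,
        hall _ ⟨by positivity, NNReal.half_lt_self hε.ne'⟩, ?_⟩
      rintro t ⟨⟨ht0, htε⟩, -⟩
      exact hall t ⟨ht0, lt_of_le_of_lt htε (NNReal.half_lt_self hε.ne')⟩

end MITL
end

section
/- For every signal f, every MTL formula φ, and every real c > 0: f ⊨ φ R_(0,c) φ if and only if f ⊨ φ R_(0,∞) φ, under the new satisfaction relation ⊨. -/
open scoped NNReal
open Set

namespace MITL

variable {AP : Type*}

theorem next_bound_irrelevant (f : Signal AP) (φ : MTL AP) (c : ℝ≥0) (hc : 0 < c) :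
    NSat f (.release φ φ (Set.Ioo 0 c)) ↔ NSat f (.release φ φ (Set.Ioi 0)) := by
  set P : ℝ≥0 → Prop := fun t => NSat (shift f t) φ with hP
  have hhalf : (0:ℝ≥0) < c / 2 := by positivity
  have hhalf' : c / 2 < c := NNReal.half_lt_self hc.ne'
  have key : ∀ s : Set ℝ≥0,
      (∃ t1 : ℝ≥0, 0 < t1 ∧ ∀ t ∈ Set.Ioc 0 t1, P t) →
      (∃ t1 : ℝ≥0, 0 < t1 ∧ P t1 ∧ ∀ t2 ∈ Set.Ioc 0 t1 ∩ s, P t2) := by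
    rintro s ⟨t1, ht1, hall⟩
    exact ⟨t1, ht1, hall t1 ⟨ht1, le_refl t1⟩, fun t2 ht2 => hall t2 ht2.1⟩
  have toQ_left : NSat f (.release φ φ (Set.Ioo 0 c)) →
      ∃ t1 : ℝ≥0, 0 < t1 ∧ ∀ t ∈ Set.Ioc 0 t1, P t := by
    rintro (h | ⟨t1, ht1, hPt1, hall⟩ | ⟨t1, _, t2, ht2, hlt, hall⟩)
    · exact ⟨c / 2, hhalf, fun t ht => h t ⟨ht.1, lt_of_le_of_lt ht.2 hhalf'⟩⟩
    · rcases lt_or_ge t1 c with hcase | hcase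
      · exact ⟨t1, ht1, fun t ht => hall t ⟨ht, ht.1, lt_of_le_of_lt ht.2 hcase⟩⟩
      · refine ⟨c / 2, hhalf, fun t ht => ?_⟩
        have htc : t < c := lt_of_le_of_lt ht.2 hhalf'
        exact hall t ⟨⟨ht.1, le_trans htc.le hcase⟩, ht.1, htc⟩
    · refine ⟨t2, ht2.1, fun t ht => ?_⟩
      have htI : t ∈ Set.Ioo 0 c := ⟨ht.1, lt_of_le_of_lt ht.2 ht2.2⟩
      rcases le_or_gt t t1 with h1 | h1
      · exact (hall t htI).1 h1
      · exact (hall t htI).2 h1 ht.2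
  have toQ_right : NSat f (.release φ φ (Set.Ioi 0)) →
      ∃ t1 : ℝ≥0, 0 < t1 ∧ ∀ t ∈ Set.Ioc 0 t1, P t := by
    rintro (h | ⟨t1, ht1, hPt1, hall⟩ | ⟨t1, _, t2, ht2, hlt, hall⟩)
    · exact ⟨1, one_pos, fun t ht => h t ht.1⟩
    · exact ⟨t1, ht1, fun t ht => hall t ⟨ht, ht.1⟩⟩
    · refine ⟨t2, ht2, fun t ht => ?_⟩
      rcases le_or_gt t t1 with h1 | h1
      · exact (hall t ht.1).1 h1
      · exact (hall t ht.1).2 h1 ht.2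
  constructor
  · intro h
    exact Or.inr (Or.inl (key _ (toQ_left h)))
  · intro h
    obtain ⟨t1, ht1, hall⟩ := toQ_right h
    refine Or.inr (Or.inl ?_)
    refine ⟨min t1 (c / 2), lt_min ht1 hhalf, hall _ ⟨lt_min ht1 hhalf, min_le_left _ _⟩,
      fun t2 ht2 => hall t2 ⟨ht2.1.1, le_trans ht2.1.2 (min_le_left _ _)⟩⟩

end MITL
end

section
/- Let p, q ∈ AP be distinct, let I be an interval of nonnegative reals, and let c be a real with inf I < c < sup I. Let f be the signal with f(t) = {p} for t ∈ [0,c] and f(t) = {q} for t > c. Then, under the OLD satisfaction relation: f does not satisfy p U_I q (so f ⊨old ¬(p U_I q)), and f also does not satisfy (¬p) R_I (¬q). In particular, the old semantics violates the duality of until and release on the finitely variable signal f. -/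
open scoped NNReal ENNReal
open Set

namespace MITL

variable {AP : Type*}

/-- The supremum of a set of nonnegative reals, computed in `ℝ≥0∞`
(so that sets unbounded above have supremum `∞`). -/
noncomputable def supE (I : Set ℝ≥0) : ℝ≥0∞ := sSup ((fun x : ℝ≥0 => (x : ℝ≥0∞)) '' I)

theorem _root_.Set.OrdConnected.Ioc_subset_of_csInf_lt {α : Type*}
    [ConditionallyCompleteLinearOrder α] {I : Set α} (hI : I.OrdConnected) {c t : α}
    (hc : sInf I < c) (ht : t ∈ I) : Ioc c t ⊆ I := by
  obtain ⟨s, hsI, hsc⟩ := exists_lt_of_csInf_lt ⟨t, ht⟩ hc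
  exact fun x hx => hI.out hsI ht ⟨hsc.le.trans hx.1.le, hx.2⟩

theorem exists_mem_gt_of_lt_supE {I : Set ℝ≥0} {c : ℝ≥0} (hc : (c : ℝ≥0∞) < supE I) :
    ∃ t ∈ I, c < t := by
  obtain ⟨_, ⟨t, htI, rfl⟩, hct⟩ := lt_sSup_iff.mp hc
  exact ⟨t, htI, ENNReal.coe_lt_coe.mp hct⟩

def stepSignal (p q : AP) (c : ℝ≥0) : Signal AP := fun t => if t ≤ c then {p} else {q}

theorem OSat_shift_atom (f : Signal AP) (t : ℝ≥0) (p : AP) :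
    OSat (shift f t) (.atom p) ↔ p ∈ f t := by
  simp [OSat, shift]

section stepSignal

variable {p q : AP} {c t : ℝ≥0}

theorem mem_stepSignal_left (hpq : p ≠ q) : p ∈ stepSignal p q c t ↔ t ≤ c := by
  by_cases h : t ≤ c <;> simp [stepSignal, h, hpq]

theorem mem_stepSignal_right (hpq : p ≠ q) : q ∈ stepSignal p q c t ↔ c < t := by
  by_cases h : t ≤ c <;> simp [stepSignal, h, hpq.symm, lt_of_not_ge]

/-- Any witness `t₁ > c` for `q` leaves a time in `(c, t₁)` where `p` already fails. -/
theorem not_OSat_until_stepSignal (hpq : p ≠ q) (I : Set ℝ≥0) :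
    ¬ OSat (stepSignal p q c) (.until_ (.atom p) (.atom q) I) := by
  rintro ⟨t₁, -, hq, hp⟩
  rw [OSat_shift_atom, mem_stepSignal_right hpq] at hq
  obtain ⟨t₂, hct₂, ht₂⟩ := exists_between hq
  have := hp t₂ ⟨pos_of_gt hct₂, ht₂⟩
  rw [OSat_shift_atom, mem_stepSignal_left hpq] at this
  exact this.not_gt hct₂

/-- In the second disjunct, `¬p` at `t₁` forces `t₁ > c`, and then `q` holds at
`min t₁ t ∈ (c, t] ⊆ I`. -/
theorem not_OSat_release_stepSignal (hpq : p ≠ q) {I : Set ℝ≥0} (hct : c < t)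
    (hI : Ioc c t ⊆ I) :
    ¬ OSat (stepSignal p q c) (.release (.neg (.atom p)) (.neg (.atom q)) I) := by
  have hq : ∀ s ∈ Ioc c t, OSat (shift (stepSignal p q c) s) (.atom q) := fun s hs => by
    rw [OSat_shift_atom, mem_stepSignal_right hpq]; exact hs.1
  rintro (hall | ⟨t₁, -, hp, hall⟩)
  · exact hall t (hI ⟨hct, le_rfl⟩) (hq t ⟨hct, le_rfl⟩)
  · have hct₁ : c < t₁ := by
      have hp : ¬ OSat (shift (stepSignal p q c) t₁) (.atom p) := hp
      rwa [OSat_shift_atom, mem_stepSignal_left hpq, not_le] at hp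
    have hmin : min t₁ t ∈ Ioc c t := ⟨lt_min hct₁ hct, min_le_right _ _⟩
    exact hall _ ⟨⟨pos_of_gt hmin.1, min_le_left _ _⟩, hI hmin⟩ (hq _ hmin)

end stepSignal

theorem old_semantics_not_dual (p q : AP) (hpq : p ≠ q)
    (I : Set ℝ≥0) (hI : I.OrdConnected)
    (c : ℝ≥0) (hc1 : sInf I < c) (hc2 : (c : ℝ≥0∞) < supE I)
    (f : Signal AP) (hf : f = fun t => if t ≤ c then ({p} : Set AP) else ({q} : Set AP)) :
    ¬ OSat f (.until_ (.atom p) (.atom q) I) ∧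
    OSat f (.neg (.until_ (.atom p) (.atom q) I)) ∧
    ¬ OSat f (.release (.neg (.atom p)) (.neg (.atom q)) I) := by
  obtain rfl : f = stepSignal p q c := hf
  obtain ⟨t, htI, hct⟩ := exists_mem_gt_of_lt_supE hc2
  have hU := not_OSat_until_stepSignal hpq (c := c) I
  exact ⟨hU, hU, not_OSat_release_stepSignal hpq hct (hI.Ioc_subset_of_csInf_lt hc1 htI)⟩

end MITL
end

section
/- Let 𝒫 be a finite set of two-dimensional polyhedra, let C1 := ⋃_{P∈𝒫} (V_P ∪ L_P), let C2 := {t2 ∈ ℝ : ∃ t1 ∈ ℝ, (t1,t2) ∈ C1}, and let r ∈ ℝ be such that [r−ε, r+ε] ∩ C2 = ∅ for some ε > 0. Then there exists δ > 0 such that for every P ∈ 𝒫 and every c ∈ ℝ: if (c,r) ∈ closure(⟦P⟧), then the width of the slice closure(⟦P⟧) ∩ {(t1,t2) : t1 = c} does not lie in the interval (0, δ]. -/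
/-!
Above a point `(c, r)` of the closed polyhedron `closure ⟦P⟧`, a bounded vertical slice is the
interval between the lowest upper boundary line `i` and the highest lower boundary line `j`.
If `i` and `j` are parallel, the width of the slice is their vertical distance, one of finitely
many numbers. Otherwise the two lines cross at horizontal distance `width / |slope i - slope j|`
from `c`, so the part of the polyhedron on that side of `c` is bounded; its point maximising first
the horizontal coordinate towards the crossing and then the height is an extreme point, and it lies
within `O(width)` of height `r`. For small widths that puts an element of `C2` into
`[r - ε, r + ε]`.
-/

open Set

namespace MITLPoly

/-- Relation symbols for linear constraints. -/
inductive Rel where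
  | lt | le | gt | ge

/-- Evaluation of a relation symbol. -/
def Rel.eval : Rel → ℝ → ℝ → Prop
  | .lt, x, y => x < y
  | .le, x, y => x ≤ y
  | .gt, x, y => x > y
  | .ge, x, y => x ≥ y

/-- A linear constraint `a·t1 + b·t2 ⋈ c` on points of the plane. -/
structure LinConstraint where
  a : ℝ
  b : ℝ
  rel : Rel
  c : ℝ

/-- A point satisfies a linear constraint. -/
def LinConstraint.holds (C : LinConstraint) (x : ℝ × ℝ) : Prop :=
  C.rel.eval (C.a * x.1 + C.b * x.2) C.c

/-- A two-dimensional polyhedron: a finite list of linear constraints. -/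
abbrev Polyhedron := List LinConstraint

/-- The solution set `⟦P⟧` of a polyhedron. -/
def sols (P : Polyhedron) : Set (ℝ × ℝ) := {x | ∀ C ∈ P, C.holds x}

/-- `V_P`: the extreme points of the closure of `⟦P⟧`. -/
def VP (P : Polyhedron) : Set (ℝ × ℝ) := Set.extremePoints ℝ (closure (sols P))

/-- `L_P`: points of `⟦P⟧` lying on a one-dimensional face (edge) of `⟦P⟧`
contained in a horizontal line `{(t1, t2) : t2 = c}`. -/
def LP (P : Polyhedron) : Set (ℝ × ℝ) :=
  {x | x ∈ sols P ∧ ∃ F : Set (ℝ × ℝ), IsExtreme ℝ (sols P) F ∧ x ∈ F ∧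
    (∃ c : ℝ, ∀ y ∈ F, y.2 = c) ∧ ¬ F.Subsingleton}

/-- `C1 := ⋃_{P ∈ Ps} (V_P ∪ L_P)`. -/
def C1 (Ps : Set Polyhedron) : Set (ℝ × ℝ) := ⋃ P ∈ Ps, (VP P ∪ LP P)

/-- `C2`: the projection of `C1` on the second coordinate. -/
def C2 (Ps : Set Polyhedron) : Set ℝ := {t2 | ∃ t1, (t1, t2) ∈ C1 Ps}

/-- The width of a set of reals, in `EReal`: `sup J − inf J`, which is `⊥`
for the empty set. -/
noncomputable def eWidth (J : Set ℝ) : EReal :=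
  sSup (Real.toEReal '' J) - sInf (Real.toEReal '' J)

open scoped Topology

section ExtremePoints

lemma eq_of_mem_openSegment_of_le {p q s : ℝ} (hs : s ∈ openSegment ℝ p q) (hp : p ≤ s)
    (hq : q ≤ s) : p = s ∧ q = s := by
  rcases lt_trichotomy p q with hpq | rfl | hpq
  · exact absurd (openSegment_subset_Ioo hpq hs).2 hq.not_gt
  · rw [openSegment_same] at hs
    exact ⟨hs.symm, hs.symm⟩
  · rw [openSegment_symm] at hs
    exact absurd (openSegment_subset_Ioo hpq hs).2 hp.not_gt

lemma mem_extremePoints_of_lexMax {E : Type*} [AddCommGroup E] [Module ℝ E] {Q : Set E} {e : E}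
    (f g : E →ₗ[ℝ] ℝ) (hfg : ∀ x, f x = f e → g x = g e → x = e) (he : e ∈ Q)
    (hf : ∀ x ∈ Q, f x ≤ f e) (hg : ∀ x ∈ Q, f x = f e → g x ≤ g e) :
    e ∈ extremePoints ℝ Q := by
  refine ⟨he, fun x hx y hy hxy => ?_⟩
  have hmap : ∀ h : E →ₗ[ℝ] ℝ, h e ∈ openSegment ℝ (h x) (h y) := fun h =>
    image_openSegment ℝ h.toAffineMap x y ▸ mem_image_of_mem h hxy
  obtain ⟨hfx, hfy⟩ := eq_of_mem_openSegment_of_le (hmap f) (hf x hx) (hf y hy)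
  obtain ⟨hgx, -⟩ := eq_of_mem_openSegment_of_le (hmap g) (hg x hx hfx) (hg y hy hfy)
  exact hfg x hfx hgx

lemma exists_mem_extremePoints_mul_fst_ge {Q : Set (ℝ × ℝ)} (hQ : IsClosed Q) {σ : ℝ}
    (hσ : σ ≠ 0) {p : ℝ × ℝ} (hp : p ∈ Q)
    (hbdd : Bornology.IsBounded (Q ∩ {x | σ * p.1 ≤ σ * x.1})) :
    ∃ e ∈ extremePoints ℝ Q, σ * p.1 ≤ σ * e.1 := by
  set K := Q ∩ {x | σ * p.1 ≤ σ * x.1}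
  have hK : IsCompact K := Metric.isCompact_of_isClosed_isBounded
    (hQ.inter (isClosed_le continuous_const (by fun_prop))) hbdd
  obtain ⟨z, hzK, hz⟩ := hK.exists_isMaxOn ⟨p, hp, (le_rfl : σ * p.1 ≤ σ * p.1)⟩
    (f := fun x => σ * x.1) (by fun_prop)
  obtain ⟨e, ⟨heK, he1⟩, he⟩ :=
    (hK.inter_right (isClosed_eq continuous_fst continuous_const)).exists_isMaxOn
      ⟨z, hzK, rfl⟩ (f := Prod.snd) continuous_snd.continuousOn
  have he1 : e.1 = z.1 := he1
  refine ⟨e, mem_extremePoints_of_lexMax (σ • LinearMap.fst ℝ ℝ ℝ) (LinearMap.snd ℝ ℝ ℝ)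
    (fun x h1 h2 => Prod.ext (mul_left_cancel₀ hσ h1) h2) heK.1 (fun x hx => ?_)
    (fun x hx h1 => ?_), heK.2⟩
  · show σ * x.1 ≤ σ * e.1
    rw [he1]
    by_cases hxK : σ * p.1 ≤ σ * x.1
    · exact hz ⟨hx, hxK⟩
    · exact (not_le.1 hxK).le.trans hzK.2
  · have h1 : σ * x.1 = σ * e.1 := h1
    have hxK : x ∈ K := ⟨hx, heK.2.trans h1.ge⟩
    exact he ⟨hxK, (mul_left_cancel₀ hσ h1).trans he1⟩

lemma abs_sub_le_of_between_lines {sU sL u l r t y : ℝ} (hl : l ≤ r) (hu : r ≤ u)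
    (hyl : l + sL * t ≤ y) (hyu : y ≤ u + sU * t) (ht : (sU - sL) * t ≤ 0) :
    |sU - sL| * |t| ≤ u - l ∧ |sU - sL| * |y - r| ≤ (|sU - sL| + |sU| + |sL|) * (u - l) := by
  have hBt : |sU - sL| * |t| ≤ u - l := by
    rw [← abs_mul, abs_of_nonpos ht]
    linarith
  refine ⟨hBt, ?_⟩
  have hy : |y - r| ≤ (u - l) + (|sU| + |sL|) * |t| := by
    have hU : sU * t ≤ |sU| * |t| := abs_mul sU t ▸ le_abs_self _
    have hL : -(sL * t) ≤ |sL| * |t| := abs_mul sL t ▸ neg_le_abs _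
    have : 0 ≤ |sU| * |t| := by positivity
    have : 0 ≤ |sL| * |t| := by positivity
    rw [abs_sub_le_iff]
    constructor <;> linarith
  calc |sU - sL| * |y - r| ≤ |sU - sL| * ((u - l) + (|sU| + |sL|) * |t|) := by gcongr
    _ = |sU - sL| * (u - l) + (|sU| + |sL|) * (|sU - sL| * |t|) := by ring
    _ ≤ |sU - sL| * (u - l) + (|sU| + |sL|) * (u - l) := by gcongr
    _ = (|sU - sL| + |sU| + |sL|) * (u - l) := by ring

lemma exists_mem_extremePoints_abs_sub_le {Q : Set (ℝ × ℝ)} (hQ : IsClosed Q)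
    {sU sL u l c r : ℝ} (hs : sU ≠ sL)
    (hQ_between : ∀ x ∈ Q, l + sL * (x.1 - c) ≤ x.2 ∧ x.2 ≤ u + sU * (x.1 - c))
    (hl : l ≤ r) (hu : r ≤ u) (hcr : (c, r) ∈ Q) :
    ∃ e ∈ extremePoints ℝ Q, |sU - sL| * |e.2 - r| ≤ (|sU - sL| + |sU| + |sL|) * (u - l) := by
  have hB : 0 < |sU - sL| := abs_pos.2 (sub_ne_zero.2 hs)
  -- the lines cross on the side where `-(sU - sL) * x.1` grows, so `Q` is bounded on that side
  have hnear : ∀ x ∈ Q, -(sU - sL) * c ≤ -(sU - sL) * x.1 → |sU - sL| * |x.1 - c| ≤ u - l ∧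
      |sU - sL| * |x.2 - r| ≤ (|sU - sL| + |sU| + |sL|) * (u - l) := fun x hx hxc =>
    abs_sub_le_of_between_lines hl hu (hQ_between x hx).1 (hQ_between x hx).2 (by linarith)
  have hbdd : Bornology.IsBounded (Q ∩ {x | -(sU - sL) * (c, r).1 ≤ -(sU - sL) * x.1}) := by
    rw [Metric.isBounded_iff_subset_closedBall (c, r)]
    refine ⟨max ((u - l) / |sU - sL|) ((|sU - sL| + |sU| + |sL|) * (u - l) / |sU - sL|),
      fun x ⟨hx, hxc⟩ => ?_⟩
    obtain ⟨h1, h2⟩ := hnear x hx hxc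
    rw [Metric.mem_closedBall, Prod.dist_eq, Real.dist_eq, Real.dist_eq]
    exact max_le_max ((le_div_iff₀ hB).2 (by linarith)) ((le_div_iff₀ hB).2 (by linarith))
  obtain ⟨e, he, hce⟩ :=
    exists_mem_extremePoints_mul_fst_ge hQ (neg_ne_zero.2 (sub_ne_zero.2 hs)) hcr hbdd
  exact ⟨e, he, (hnear e he.1 hce).2⟩

end ExtremePoints

section Width

lemma eWidth_Icc {m M : ℝ} (h : m ≤ M) : eWidth (Icc m M) = ((M - m : ℝ) : EReal) := by
  rw [eWidth, IsGreatest.csSup_eq (EReal.coe_strictMono.map_isGreatest.2 (isGreatest_Icc h)),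
    IsLeast.csInf_eq (EReal.coe_strictMono.map_isLeast.2 (isLeast_Icc h)), EReal.coe_sub]

lemma eWidth_eq_top_of_Ici_subset {J : Set ℝ} {r : ℝ} (h : Ici r ⊆ J) : eWidth J = ⊤ := by
  have hsup : sSup (Real.toEReal '' J) = ⊤ := (EReal.eq_top_iff_forall_lt _).2 fun y =>
    (EReal.coe_lt_coe_iff.2 (lt_max_of_lt_left (lt_add_one y))).trans_le
      (le_sSup (mem_image_of_mem _ (h (le_max_right (y + 1) r))))
  have hinf : sInf (Real.toEReal '' J) ≠ ⊤ :=
    ne_top_of_le_ne_top (EReal.coe_ne_top r) (sInf_le (mem_image_of_mem _ (h self_mem_Ici)))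
  rw [eWidth, hsup, EReal.top_sub hinf]

lemma eWidth_eq_top_of_Iic_subset {J : Set ℝ} {r : ℝ} (h : Iic r ⊆ J) : eWidth J = ⊤ := by
  have hinf : sInf (Real.toEReal '' J) = ⊥ := (EReal.eq_bot_iff_forall_lt _).2 fun y =>
    (sInf_le (mem_image_of_mem _ (h (min_le_right (y - 1) r)))).trans_lt
      (EReal.coe_lt_coe_iff.2 (min_lt_of_left_lt (sub_one_lt y)))
  have hsup : sSup (Real.toEReal '' J) ≠ ⊥ :=
    ne_bot_of_le_ne_bot (EReal.coe_ne_bot r) (le_sSup (mem_image_of_mem _ (h self_mem_Iic)))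
  rw [eWidth, hinf, EReal.sub_bot hsup]

end Width

namespace LinConstraint

/-- `±1`, chosen so that `C` reads `C.lhs x < 0` or `C.lhs x ≤ 0`. -/
def sign (C : LinConstraint) : ℝ :=
  match C.rel with
  | .lt | .le => 1
  | .gt | .ge => -1

def lhs (C : LinConstraint) (x : ℝ × ℝ) : ℝ := C.sign * (C.a * x.1 + C.b * x.2 - C.c)

/-- The boundary line of `C` as a graph over the first coordinate (junk `0` when `C.b = 0`). -/
noncomputable def line (C : LinConstraint) (t : ℝ) : ℝ := (C.c - C.a * t) / C.b

noncomputable def slope (C : LinConstraint) : ℝ := -C.a / C.b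

variable {C : LinConstraint} {x : ℝ × ℝ}

lemma lhs_nonpos_of_holds (h : C.holds x) : C.lhs x ≤ 0 := by
  obtain ⟨a, b, rel, c⟩ := C
  cases rel <;> simp only [holds, Rel.eval, lhs, sign] at h ⊢ <;> linarith

lemma holds_of_mem_openSegment {y z : ℝ × ℝ} (hx : C.holds x) (hy : C.lhs y ≤ 0)
    (hz : z ∈ openSegment ℝ x y) : C.holds z := by
  obtain ⟨s, t, hs, ht, hst, rfl⟩ := hz
  obtain ⟨a, b, rel, c⟩ := C
  have hcomb : a * (s * x.1 + t * y.1) + b * (s * x.2 + t * y.2) - c =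
      s * (a * x.1 + b * x.2 - c) + t * (a * y.1 + b * y.2 - c) := by
    linear_combination c * hst
  cases rel <;>
    simp only [holds, Rel.eval, lhs, sign, Prod.fst_add, Prod.snd_add, Prod.smul_fst,
      Prod.smul_snd, smul_eq_mul] at hx hy ⊢ <;> nlinarith

lemma lhs_mk_eq (C : LinConstraint) (c t s : ℝ) :
    C.lhs (c, t) = C.lhs (c, s) + C.sign * C.b * (t - s) := by
  unfold lhs
  ring

lemma lhs_eq_mul_sub_line (hb : C.b ≠ 0) : C.lhs x = C.sign * C.b * (x.2 - C.line x.1) := by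
  unfold lhs line
  field_simp
  ring

lemma lhs_nonpos_iff_le_line (h : 0 < C.sign * C.b) : C.lhs x ≤ 0 ↔ x.2 ≤ C.line x.1 := by
  rw [lhs_eq_mul_sub_line (right_ne_zero_of_mul h.ne')]
  constructor
  · intro h'; nlinarith
  · intro h'; nlinarith

lemma lhs_nonpos_iff_line_le (h : C.sign * C.b < 0) : C.lhs x ≤ 0 ↔ C.line x.1 ≤ x.2 := by
  rw [lhs_eq_mul_sub_line (right_ne_zero_of_mul h.ne)]
  constructor
  · intro h'; nlinarith
  · intro h'; nlinarith

lemma line_eq_add_slope_mul (C : LinConstraint) (s t : ℝ) :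
    C.line t = C.line s + C.slope * (t - s) := by
  unfold line slope
  ring

end LinConstraint

open LinConstraint

def closedSols (P : Polyhedron) : Set (ℝ × ℝ) := {x | ∀ C ∈ P, C.lhs x ≤ 0}

lemma isClosed_closedSols (P : Polyhedron) : IsClosed (closedSols P) := by
  simp only [closedSols, ofPred_forall]
  exact isClosed_biInter fun C _ => isClosed_le (by unfold lhs; fun_prop) continuous_const

lemma closure_sols {P : Polyhedron} (h : (sols P).Nonempty) : closure (sols P) = closedSols P := by
  obtain ⟨x, hx⟩ := h
  refine (closure_minimal (fun y (hy : y ∈ sols P) C hC => lhs_nonpos_of_holds (hy C hC))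
    (isClosed_closedSols P)).antisymm fun y hy => ?_
  have hseg : openSegment ℝ x y ⊆ sols P := fun z hz C hC =>
    holds_of_mem_openSegment (hx C hC) (hy C hC) hz
  exact closure_mono hseg (segment_subset_closure_openSegment (right_mem_segment ℝ x y))

lemma closedSols_between {P : Polyhedron} {i j : LinConstraint} (hi : i ∈ P) (hj : j ∈ P)
    (hiU : 0 < i.sign * i.b) (hjL : j.sign * j.b < 0) (c : ℝ) :
    ∀ x ∈ closedSols P, j.line c + j.slope * (x.1 - c) ≤ x.2 ∧
      x.2 ≤ i.line c + i.slope * (x.1 - c) := fun x hx => by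
  rw [← line_eq_add_slope_mul, ← line_eq_add_slope_mul]
  exact ⟨(lhs_nonpos_iff_line_le hjL).1 (hx j hj), (lhs_nonpos_iff_le_line hiU).1 (hx i hi)⟩

lemma eWidth_slice_eq_top_or_eq_Icc {P : Polyhedron} {c r : ℝ} (hcr : (c, r) ∈ closedSols P) :
    eWidth {t | (c, t) ∈ closedSols P} = ⊤ ∨ ∃ i ∈ P, ∃ j ∈ P, 0 < i.sign * i.b ∧
      j.sign * j.b < 0 ∧ {t | (c, t) ∈ closedSols P} = Icc (j.line c) (i.line c) := by
  by_cases hup : ∃ i ∈ P, 0 < i.sign * i.b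
  swap
  · push Not at hup
    refine .inl (eWidth_eq_top_of_Ici_subset fun t (ht : r ≤ t) C hC => ?_)
    rw [lhs_mk_eq C c t r]
    nlinarith [hcr C hC, hup C hC]
  by_cases hlo : ∃ j ∈ P, j.sign * j.b < 0
  swap
  · push Not at hlo
    refine .inl (eWidth_eq_top_of_Iic_subset fun t (ht : t ≤ r) C hC => ?_)
    rw [lhs_mk_eq C c t r]
    nlinarith [hcr C hC, hlo C hC]
  obtain ⟨i, ⟨hi, hiU⟩, hmin⟩ := exists_min_image {C | C ∈ P ∧ 0 < C.sign * C.b}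
    (fun C => C.line c) (P.finite_toSet.subset fun _ h => h.1) hup
  obtain ⟨j, ⟨hj, hjL⟩, hmax⟩ := exists_max_image {C | C ∈ P ∧ C.sign * C.b < 0}
    (fun C => C.line c) (P.finite_toSet.subset fun _ h => h.1) hlo
  refine .inr ⟨i, hi, j, hj, hiU, hjL, Subset.antisymm (fun t ht => ?_) fun t ht C hC => ?_⟩
  · exact ⟨(lhs_nonpos_iff_line_le hjL).1 (ht j hj), (lhs_nonpos_iff_le_line hiU).1 (ht i hi)⟩
  rcases lt_trichotomy (C.sign * C.b) 0 with hC' | hC' | hC'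
  · exact (lhs_nonpos_iff_line_le hC').2 ((hmax C ⟨hC, hC'⟩).trans ht.1)
  · rw [lhs_mk_eq C c t r, hC', zero_mul, add_zero]
    exact hcr C hC
  · exact (lhs_nonpos_iff_le_line hC').2 (ht.2.trans (hmin C ⟨hC, hC'⟩))

def IsSmallFor (ε : ℝ) (i j : LinConstraint) (δ : ℝ) : Prop :=
  (i.slope = j.slope → 0 < i.line 0 - j.line 0 → δ < i.line 0 - j.line 0) ∧
    (i.slope ≠ j.slope →
      δ * (|i.slope - j.slope| + |i.slope| + |j.slope|) < ε * |i.slope - j.slope|)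

lemma eventually_isSmallFor {ε : ℝ} (hε : 0 < ε) (i j : LinConstraint) :
    ∀ᶠ δ in 𝓝 0, IsSmallFor ε i j δ := by
  refine .and ?_ ?_
  · by_cases hd : 0 < i.line 0 - j.line 0
    · exact (eventually_lt_nhds hd).mono fun _ h _ _ => h
    · exact .of_forall fun _ _ h => absurd h hd
  · by_cases hs : i.slope = j.slope
    · exact .of_forall fun _ h => absurd hs h
    · have hB : 0 < ε * |i.slope - j.slope| := mul_pos hε (abs_pos.2 (sub_ne_zero.2 hs))
      exact ((continuous_mul_const _).tendsto' 0 0 (zero_mul _)).eventually_lt_const hB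
        |>.mono fun _ h _ => h

lemma eWidth_slice_notMem_Ioc {P : Polyhedron} {r ε δ c : ℝ}
    (hext : ∀ e ∈ extremePoints ℝ (closedSols P), e.2 ∉ Icc (r - ε) (r + ε))
    (hδ : ∀ i ∈ P, ∀ j ∈ P, IsSmallFor ε i j δ)
    (hcr : (c, r) ∈ closedSols P) :
    eWidth {t | (c, t) ∈ closedSols P} ∉ Ioc 0 (δ : EReal) := by
  rintro ⟨hpos, hle⟩
  obtain htop | ⟨i, hi, j, hj, hiU, hjL, hslice⟩ := eWidth_slice_eq_top_or_eq_Icc hcr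
  · exact (EReal.coe_lt_top δ).not_ge (htop ▸ hle)
  have hr : r ∈ Icc (j.line c) (i.line c) := hslice ▸ hcr
  rw [hslice, eWidth_Icc (hr.1.trans hr.2)] at hpos hle
  have hw : 0 < i.line c - j.line c := EReal.coe_pos.1 hpos
  have hwδ : i.line c - j.line c ≤ δ := EReal.coe_le_coe_iff.1 hle
  by_cases hs : i.slope = j.slope
  · have hw0 : i.line c - j.line c = i.line 0 - j.line 0 := by
      rw [i.line_eq_add_slope_mul 0, j.line_eq_add_slope_mul 0, hs]
      ring
    rw [hw0] at hw hwδ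
    exact ((hδ i hi j hj).1 hs hw).not_ge hwδ
  obtain ⟨e, he, hnear⟩ := exists_mem_extremePoints_abs_sub_le (isClosed_closedSols P) hs
    (closedSols_between hi hj hiU hjL c) hr.1 hr.2 hcr
  have hB : 0 < |i.slope - j.slope| := abs_pos.2 (sub_ne_zero.2 hs)
  have hlt : |i.slope - j.slope| * |e.2 - r| < |i.slope - j.slope| * ε := calc
    _ ≤ (|i.slope - j.slope| + |i.slope| + |j.slope|) * (i.line c - j.line c) := hnear
    _ ≤ (|i.slope - j.slope| + |i.slope| + |j.slope|) * δ := by gcongr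
    _ < |i.slope - j.slope| * ε := by linarith [(hδ i hi j hj).2 hs]
  have hclose := abs_sub_lt_iff.1 (lt_of_mul_lt_mul_left hlt hB.le)
  exact hext e he ⟨by linarith, by linarith⟩

theorem slice_width_dichotomy (Ps : Set Polyhedron) (hfin : Ps.Finite)
    (r ε : ℝ) (hε : 0 < ε) (hr : Set.Icc (r - ε) (r + ε) ∩ C2 Ps = ∅) :
    ∃ δ : ℝ, 0 < δ ∧ ∀ P ∈ Ps, ∀ c : ℝ, (c, r) ∈ closure (sols P) →
      eWidth {t2 | (c, t2) ∈ closure (sols P)} ∉ Set.Ioc (0 : EReal) (δ : EReal) := by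
  set 𝒞 : Set LinConstraint := ⋃ P ∈ Ps, {C | C ∈ P}
  have h𝒞 : 𝒞.Finite := hfin.biUnion fun P _ => P.finite_toSet
  have hsmall : ∀ᶠ δ in 𝓝 0, ∀ i ∈ 𝒞, ∀ j ∈ 𝒞, IsSmallFor ε i j δ :=
    h𝒞.eventually_all.2 fun i _ => h𝒞.eventually_all.2 fun j _ => eventually_isSmallFor hε i j
  obtain ⟨δ, hδ, hδpos⟩ :=
    ((hsmall.filter_mono nhdsWithin_le_nhds).and (self_mem_nhdsWithin (s := Ioi 0))).exists
  refine ⟨δ, hδpos, fun P hP c hc => ?_⟩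
  have hne : (sols P).Nonempty := closure_nonempty_iff.1 ⟨_, hc⟩
  have h𝒞P : ∀ C ∈ P, C ∈ 𝒞 := fun C hC => mem_biUnion hP hC
  rw [closure_sols hne] at hc ⊢
  refine eWidth_slice_notMem_Ioc (fun e he he2 => ?_)
    (fun i hi j hj => hδ i (h𝒞P i hi) j (h𝒞P j hj)) hc
  have heV : e ∈ VP P := by rwa [VP, closure_sols hne]
  exact eq_empty_iff_forall_notMem.1 hr e.2 ⟨he2, e.1, mem_biUnion hP (Or.inl heV)⟩

end MITLPoly
end

section
/- For every MTL formula φ: the number of distinct subformulas of toOld(φ) is at most 6 times the number of distinct subformulas of φ, i.e. |Sub_{toOld(φ)}| ≤ 6·|Sub_φ|. -/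
open scoped NNReal ENNReal
open Set

namespace MITL

variable {AP : Type*}

open Classical in
/-- The transformation `toOld` turning a formula interpreted in the new
semantics into one interpreted in the old semantics. -/
noncomputable def toOld : MTL AP → MTL AP
  | .top => .top
  | .bot => .bot
  | .atom p => .atom p
  | .neg φ => .neg (toOld φ)
  | .disj φ1 φ2 => .disj (toOld φ1) (toOld φ2)
  | .conj φ1 φ2 => .conj (toOld φ1) (toOld φ2)
  | .until_ φ1 φ2 I => .until_ (toOld φ1) (toOld φ2) I
  | .release φ1 φ2 I =>
      if 0 < sInf I then
        .disj (.release (toOld φ1) (toOld φ2) I) (.release (Next (toOld φ1)) (toOld φ2) I)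
      else if sInf I ∈ I then
        .disj (.disj (.release (toOld φ1) (toOld φ2) I)
            (.release (Next (toOld φ1)) (toOld φ2) I))
          (.conj (toOld φ2) (Next (toOld φ1)))
      else
        .disj (.disj (.release (toOld φ1) (toOld φ2) I)
            (.release (Next (toOld φ1)) (toOld φ2) I))
          (Next (toOld φ1))

open Classical in
/-- The finite set of subformulas of an MTL formula (including the formula
itself). -/
noncomputable def Sub : MTL AP → Finset (MTL AP)
  | .top => {.top}
  | .bot => {.bot}
  | .atom p => {.atom p}
  | .neg φ => insert (.neg φ) (Sub φ)
  | .disj φ1 φ2 => insert (.disj φ1 φ2) (Sub φ1 ∪ Sub φ2)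
  | .conj φ1 φ2 => insert (.conj φ1 φ2) (Sub φ1 ∪ Sub φ2)
  | .until_ φ1 φ2 I => insert (.until_ φ1 φ2 I) (Sub φ1 ∪ Sub φ2)
  | .release φ1 φ2 I => insert (.release φ1 φ2 I) (Sub φ1 ∪ Sub φ2)

open Classical in
/-- For each subformula `ψ`, the (at most 6) formulas that `toOld ψ` can
contribute as "new" subformulas. -/
noncomputable def G : MTL AP → Finset (MTL AP)
  | .release φ1 φ2 I =>
      if 0 < sInf I then
        {.disj (.release (toOld φ1) (toOld φ2) I) (.release (Next (toOld φ1)) (toOld φ2) I),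
          .release (toOld φ1) (toOld φ2) I,
          .release (Next (toOld φ1)) (toOld φ2) I,
          Next (toOld φ1)}
      else if sInf I ∈ I then
        {.disj (.disj (.release (toOld φ1) (toOld φ2) I)
            (.release (Next (toOld φ1)) (toOld φ2) I))
          (.conj (toOld φ2) (Next (toOld φ1))),
          .disj (.release (toOld φ1) (toOld φ2) I) (.release (Next (toOld φ1)) (toOld φ2) I),
          .release (toOld φ1) (toOld φ2) I,
          .release (Next (toOld φ1)) (toOld φ2) I,
          .conj (toOld φ2) (Next (toOld φ1)),
          Next (toOld φ1)}
      else
        {.disj (.disj (.release (toOld φ1) (toOld φ2) I)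
            (.release (Next (toOld φ1)) (toOld φ2) I))
          (Next (toOld φ1)),
          .disj (.release (toOld φ1) (toOld φ2) I) (.release (Next (toOld φ1)) (toOld φ2) I),
          .release (toOld φ1) (toOld φ2) I,
          .release (Next (toOld φ1)) (toOld φ2) I,
          Next (toOld φ1)}
  | ψ => {toOld ψ}

open Classical in
lemma card_insert_le' {s : Finset (MTL AP)} {a : MTL AP} {n : ℕ} (h : s.card ≤ n) :
    (insert a s).card ≤ n + 1 :=
  (Finset.card_insert_le _ _).trans (by omega)

open Classical in
lemma G_card_le (ψ : MTL AP) : (G ψ).card ≤ 6 := by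
  cases ψ <;> simp only [G, Finset.card_singleton] <;> try omega
  split_ifs
  · exact (card_insert_le' (card_insert_le' (card_insert_le'
      (le_of_eq (Finset.card_singleton _))))).trans (by omega)
  · exact card_insert_le' (card_insert_le' (card_insert_le' (card_insert_le'
      (card_insert_le' (le_of_eq (Finset.card_singleton _))))))
  · exact (card_insert_le' (card_insert_le' (card_insert_le' (card_insert_le'
      (le_of_eq (Finset.card_singleton _)))))).trans (by omega)

lemma mem_Sub_self (φ : MTL AP) : φ ∈ Sub φ := by
  cases φ <;> simp [Sub]

open Classical in
lemma Sub_toOld_subset (φ : MTL AP) : Sub (toOld φ) ⊆ (Sub φ).biUnion G := by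
  induction φ with
  | top => simp [toOld, Sub, G]
  | bot => simp [toOld, Sub, G]
  | atom p => simp [toOld, Sub, G]
  | neg φ ih =>
      simp only [toOld, Sub]
      refine Finset.insert_subset ?_ ?_
      · exact Finset.mem_biUnion.2 ⟨.neg φ, mem_Sub_self _, by simp [G, toOld]⟩
      · exact ih.trans (Finset.biUnion_subset_biUnion_of_subset_left _ (by
          intro x hx; simp [Sub, hx]))
  | disj φ1 φ2 ih1 ih2 =>
      simp only [toOld, Sub]
      refine Finset.insert_subset ?_ (Finset.union_subset ?_ ?_)
      · exact Finset.mem_biUnion.2 ⟨.disj φ1 φ2, mem_Sub_self _, by simp [G, toOld]⟩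
      · exact ih1.trans (Finset.biUnion_subset_biUnion_of_subset_left _ (by
          intro x hx; simp [Sub, hx]))
      · exact ih2.trans (Finset.biUnion_subset_biUnion_of_subset_left _ (by
          intro x hx; simp [Sub, hx]))
  | conj φ1 φ2 ih1 ih2 =>
      simp only [toOld, Sub]
      refine Finset.insert_subset ?_ (Finset.union_subset ?_ ?_)
      · exact Finset.mem_biUnion.2 ⟨.conj φ1 φ2, mem_Sub_self _, by simp [G, toOld]⟩
      · exact ih1.trans (Finset.biUnion_subset_biUnion_of_subset_left _ (by
          intro x hx; simp [Sub, hx]))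
      · exact ih2.trans (Finset.biUnion_subset_biUnion_of_subset_left _ (by
          intro x hx; simp [Sub, hx]))
  | until_ φ1 φ2 I ih1 ih2 =>
      simp only [toOld, Sub]
      refine Finset.insert_subset ?_ (Finset.union_subset ?_ ?_)
      · exact Finset.mem_biUnion.2 ⟨.until_ φ1 φ2 I, mem_Sub_self _, by simp [G, toOld]⟩
      · exact ih1.trans (Finset.biUnion_subset_biUnion_of_subset_left _ (by
          intro x hx; simp [Sub, hx]))
      · exact ih2.trans (Finset.biUnion_subset_biUnion_of_subset_left _ (by
          intro x hx; simp [Sub, hx]))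
  | release φ1 φ2 I ih1 ih2 =>
      have hs1 : Sub (toOld φ1) ⊆ (Sub (.release φ1 φ2 I)).biUnion G :=
        ih1.trans (Finset.biUnion_subset_biUnion_of_subset_left _ (by
          intro x hx; simp [Sub, hx]))
      have hs2 : Sub (toOld φ2) ⊆ (Sub (.release φ1 φ2 I)).biUnion G :=
        ih2.trans (Finset.biUnion_subset_biUnion_of_subset_left _ (by
          intro x hx; simp [Sub, hx]))
      have hG : ∀ y ∈ G (.release φ1 φ2 I),
          y ∈ (Sub (.release φ1 φ2 I)).biUnion G :=
        fun y hy => Finset.mem_biUnion.2 ⟨_, mem_Sub_self _, hy⟩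
      simp only [toOld]
      split_ifs with h1 h2
      · simp only [Sub, Next]
        refine Finset.insert_subset (hG _ (by simp [G, Next, h1]))
          (Finset.union_subset
            (Finset.insert_subset (hG _ (by simp [G, Next, h1]))
              (Finset.union_subset hs1 hs2))
            (Finset.insert_subset (hG _ (by simp [G, Next, h1]))
              (Finset.union_subset
                (Finset.insert_subset (hG _ (by simp [G, Next, h1]))
                  (Finset.union_subset hs1 hs1)) hs2)))
      · simp only [Sub, Next]
        refine Finset.insert_subset (hG _ (by simp [G, Next, h1, h2]))
          (Finset.union_subset
            (Finset.insert_subset (hG _ (by simp [G, Next, h1, h2]))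
              (Finset.union_subset
                (Finset.insert_subset (hG _ (by simp [G, Next, h1, h2]))
                  (Finset.union_subset hs1 hs2))
                (Finset.insert_subset (hG _ (by simp [G, Next, h1, h2]))
                  (Finset.union_subset
                    (Finset.insert_subset (hG _ (by simp [G, Next, h1, h2]))
                      (Finset.union_subset hs1 hs1)) hs2))))
            (Finset.insert_subset (hG _ (by simp [G, Next, h1, h2]))
              (Finset.union_subset hs2
                (Finset.insert_subset (hG _ (by simp [G, Next, h1, h2]))
                  (Finset.union_subset hs1 hs1)))))
      · simp only [Sub, Next]
        refine Finset.insert_subset (hG _ (by simp [G, Next, h1, h2]))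
          (Finset.union_subset
            (Finset.insert_subset (hG _ (by simp [G, Next, h1, h2]))
              (Finset.union_subset
                (Finset.insert_subset (hG _ (by simp [G, Next, h1, h2]))
                  (Finset.union_subset hs1 hs2))
                (Finset.insert_subset (hG _ (by simp [G, Next, h1, h2]))
                  (Finset.union_subset
                    (Finset.insert_subset (hG _ (by simp [G, Next, h1, h2]))
                      (Finset.union_subset hs1 hs1)) hs2))))
            (Finset.insert_subset (hG _ (by simp [G, Next, h1, h2]))
              (Finset.union_subset hs1 hs1)))

theorem toOld_subformulas_linear (φ : MTL AP) :
    (Sub (toOld φ)).card ≤ 6 * (Sub φ).card := by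
  classical
  calc (Sub (toOld φ)).card ≤ ((Sub φ).biUnion G).card :=
        Finset.card_le_card (Sub_toOld_subset φ)
    _ ≤ ∑ ψ ∈ Sub φ, (G ψ).card := Finset.card_biUnion_le
    _ ≤ ∑ _ψ ∈ Sub φ, 6 := Finset.sum_le_sum fun ψ _ => G_card_le ψ
    _ = 6 * (Sub φ).card := by rw [Finset.sum_const, smul_eq_mul, mul_comm]

end MITL
end

section
/- For every signal f, MTL formulas φ1 and φ2, times r, w ∈ ℝ≥0, interval I of nonnegative reals, index i ∈ {1,2,3}, and every t ∈ Pⁱ(φ1,φ2,r,w,I): f^t ⊨ φ1 U_I φ2 under the new satisfaction relation. -/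
open scoped NNReal ENNReal
open Set

namespace MITL

variable {AP : Type*}

open Classical in
/-- `closeR I` is `I ∪ {sup I}`: the supremum is added when it is a real
number, i.e. when `I` is bounded above. -/
noncomputable def closeR (I : Set ℝ≥0) : Set ℝ≥0 :=
  if BddAbove I then I ∪ {sSup I} else I

/-- `(I ∪ {sup I}) \ {inf I}`. -/
noncomputable def openLCloseR (I : Set ℝ≥0) : Set ℝ≥0 := closeR I \ {sInf I}

open Classical in
/-- `(I ∪ {inf I}) \ {sup I}`. -/
noncomputable def openRCloseL (I : Set ℝ≥0) : Set ℝ≥0 :=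
  (I ∪ {sInf I}) \ (if BddAbove I then {sSup I} else ∅)

/-- The until-witness sets `Wⁱ(φ1,φ2)` for `i ∈ {1,2,3}`
(note that in `ℝ≥0`, truncated subtraction gives `w - ε = max (w - ε) 0`). -/
def UW (f : Signal AP) (φ1 φ2 : MTL AP) : ℕ → Set (ℝ≥0 × ℝ≥0)
  | 1 => {rw | rw.1 ≤ rw.2 ∧ (∀ t ∈ Set.Ioo rw.1 rw.2, NSat (shift f t) φ1) ∧
      NSat (shift f rw.2) φ2}
  | 2 => {rw | rw.1 < rw.2 ∧ ∃ ε : ℝ≥0, 0 < ε ∧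
      (∀ t ∈ Set.Ioo rw.1 rw.2, NSat (shift f t) φ1) ∧
      ∀ t ∈ Set.Ioo (rw.2 - ε) rw.2, NSat (shift f t) φ2}
  | 3 => {rw | rw.1 < rw.2 ∧ ∃ ε : ℝ≥0, 0 < ε ∧
      (∀ t ∈ Set.Ioo rw.1 (rw.2 + ε), NSat (shift f t) φ1) ∧
      ∀ t ∈ Set.Ioo rw.2 (rw.2 + ε), NSat (shift f t) φ2}
  | _ => ∅

/-- The until proof sets `Pⁱ(φ1,φ2,r,w,I)` for `i ∈ {1,2,3}`
(membership `w - t ∈ J` is expressed as `∃ d ∈ J, w = t + d`). -/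
noncomputable def UP (f : Signal AP) (φ1 φ2 : MTL AP) (r w : ℝ≥0) (I : Set ℝ≥0) :
    ℕ → Set ℝ≥0
  | 1 => {t | (r, w) ∈ UW f φ1 φ2 1 ∧ r ≤ t ∧ ∃ d ∈ I, w = t + d}
  | 2 => {t | (r, w) ∈ UW f φ1 φ2 2 ∧ r ≤ t ∧ ∃ d ∈ openLCloseR I, w = t + d}
  | 3 => {t | (r, w) ∈ UW f φ1 φ2 3 ∧ r ≤ t ∧ ∃ d ∈ openRCloseL I, w = t + d}
  | _ => ∅

/-! For `P¹` the offset `w - t` is itself a witness of `φ1 U_I φ2` at time `t`. For `P²` and `P³`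
the offset may only be the upper (resp. lower) end point of `I`, where `φ2` need not hold; but
`φ2` holds on an `ε`-window below (resp. above) `w`, and since `I` is order-connected it contains
a point of that window, which serves as the witness. -/

lemma shift_shift (f : Signal AP) (a b : ℝ≥0) :
    shift (shift f a) b = shift f (a + b) := by
  funext u
  simp [shift, add_assoc]

lemma nsat_shift_until_of_witness {f : Signal AP} {φ1 φ2 : MTL AP} {I : Set ℝ≥0}
    {t d : ℝ≥0} (hd : d ∈ I) (h2 : NSat (shift f (t + d)) φ2)
    (h1 : ∀ s ∈ Ioo t (t + d), NSat (shift f s) φ1) :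
    NSat (shift f t) (.until_ φ1 φ2 I) :=
  ⟨d, hd, by rwa [shift_shift], fun s hs => by
    rw [shift_shift]
    exact h1 _ ⟨lt_add_of_pos_right t hs.1, add_lt_add_right hs.2 t⟩⟩

lemma _root_.Set.OrdConnected.exists_mem_Ioo {α : Type*} [LinearOrder α] [DenselyOrdered α]
    {I : Set α} (hI : I.OrdConnected) {s u a b : α} (hs : s ∈ I) (hu : u ∈ I)
    (h : max a s < min b u) : ∃ x ∈ I, x ∈ Ioo a b := by
  obtain ⟨x, hsx, hxu⟩ := exists_between h
  exact ⟨x, hI.out hs hu ⟨(le_max_right a s).trans hsx.le, hxu.le.trans (min_le_right b u)⟩,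
    (le_max_left a s).trans_lt hsx, hxu.trans_le (min_le_left b u)⟩

lemma mem_or_eq_sSup_of_mem_closeR {I : Set ℝ≥0} {d : ℝ≥0} (hd : d ∈ closeR I) :
    d ∈ I ∨ BddAbove I ∧ d = sSup I := by
  unfold closeR at hd
  split_ifs at hd with hB
  · exact hd.imp_right fun h => ⟨hB, h⟩
  · exact Or.inl hd

lemma exists_mem_lt_of_mem_openLCloseR {I : Set ℝ≥0} {d : ℝ≥0} (hd : d ∈ openLCloseR I) :
    ∃ s ∈ I, s < d := by
  obtain ⟨hdI, hd_inf⟩ := hd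
  have hne : I.Nonempty := by
    rcases I.eq_empty_or_nonempty with rfl | hne
    · rcases mem_or_eq_sSup_of_mem_closeR hdI with h | ⟨-, h⟩
      · exact absurd h (notMem_empty d)
      · simp [h, csSup_empty, NNReal.sInf_empty] at hd_inf
    · exact hne
  have hle : sInf I ≤ d := by
    rcases mem_or_eq_sSup_of_mem_closeR hdI with h | ⟨hB, rfl⟩
    · exact csInf_le (OrderBot.bddBelow I) h
    · exact csInf_le_csSup hne (OrderBot.bddBelow I) hB
  exact exists_lt_of_csInf_lt hne (lt_of_le_of_ne hle (Ne.symm hd_inf))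

lemma exists_mem_Ioo_of_mem_openLCloseR {I : Set ℝ≥0} (hI : I.OrdConnected) {d c : ℝ≥0}
    (hd : d ∈ openLCloseR I) (hc : c < d) : ∃ x ∈ I, x ∈ Ioo c d := by
  obtain ⟨s, hs, hsd⟩ := exists_mem_lt_of_mem_openLCloseR hd
  have hcs : max c s < d := max_lt hc hsd
  obtain ⟨u, hu, hcsu, hud⟩ : ∃ u ∈ I, max c s < u ∧ u ≤ d := by
    rcases mem_or_eq_sSup_of_mem_closeR hd.1 with h | ⟨hB, rfl⟩
    · exact ⟨d, h, hcs, le_rfl⟩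
    · obtain ⟨u, hu, hcsu⟩ := exists_lt_of_lt_csSup' hcs
      exact ⟨u, hu, hcsu, le_csSup hB hu⟩
  exact hI.exists_mem_Ioo hs hu (by simpa [min_eq_right hud] using hcsu)

lemma exists_mem_gt_of_mem_openRCloseL {I : Set ℝ≥0} {d : ℝ≥0} (hd : d ∈ openRCloseL I) :
    ∃ u ∈ I, d < u := by
  obtain ⟨hdI, hd_sup⟩ := hd
  by_cases hB : BddAbove I
  · rw [if_pos hB, mem_singleton_iff] at hd_sup
    have hle : d ≤ sSup I := by
      rcases hdI with h | h
      · exact le_csSup hB h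
      · rw [mem_singleton_iff.mp h]
        rcases I.eq_empty_or_nonempty with rfl | hne
        · simp
        · exact csInf_le_csSup hne (OrderBot.bddBelow I) hB
    exact exists_lt_of_lt_csSup' (lt_of_le_of_ne hle hd_sup)
  · exact not_bddAbove_iff.mp hB d

lemma exists_mem_Ioo_of_mem_openRCloseL {I : Set ℝ≥0} (hI : I.OrdConnected) {d e : ℝ≥0}
    (hd : d ∈ openRCloseL I) (he : d < e) : ∃ x ∈ I, x ∈ Ioo d e := by
  obtain ⟨u, hu, hdu⟩ := exists_mem_gt_of_mem_openRCloseL hd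
  have hdeu : d < min e u := lt_min he hdu
  obtain ⟨s, hs, hds, hseu⟩ : ∃ s ∈ I, d ≤ s ∧ s < min e u := by
    rcases hd.1 with h | h
    · exact ⟨d, h, le_rfl, hdeu⟩
    · rw [mem_singleton_iff.mp h] at hdeu ⊢
      obtain ⟨s, hs, hseu⟩ := exists_lt_of_csInf_lt ⟨u, hu⟩ hdeu
      exact ⟨s, hs, csInf_le (OrderBot.bddBelow I) hs, hseu⟩
  exact hI.exists_mem_Ioo hs hu (by simpa [max_eq_right hds] using hseu)

section UntilProofSets

variable {f : Signal AP} {φ1 φ2 : MTL AP} {r w t : ℝ≥0} {I : Set ℝ≥0}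

lemma nsat_until_of_mem_UP_one (ht : t ∈ UP f φ1 φ2 r w I 1) :
    NSat (shift f t) (.until_ φ1 φ2 I) := by
  obtain ⟨⟨-, h1, h2⟩, hrt, d, hd, rfl⟩ := ht
  exact nsat_shift_until_of_witness hd h2 fun s hs => h1 s ⟨hrt.trans_lt hs.1, hs.2⟩

lemma nsat_until_of_mem_UP_two (hI : I.OrdConnected) (ht : t ∈ UP f φ1 φ2 r w I 2) :
    NSat (shift f t) (.until_ φ1 φ2 I) := by
  obtain ⟨⟨-, ε, hε, h1, h2⟩, hrt, d, hd, rfl⟩ := ht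
  obtain ⟨s, -, hsd⟩ := exists_mem_lt_of_mem_openLCloseR hd
  obtain ⟨x, hxI, hεx, hxd⟩ :=
    exists_mem_Ioo_of_mem_openLCloseR hI hd (tsub_lt_self (pos_of_gt hsd) hε)
  have htxd : t + x < t + d := add_lt_add_right hxd t
  refine nsat_shift_until_of_witness hxI (h2 _ ⟨?_, htxd⟩) fun s hs =>
    h1 s ⟨hrt.trans_lt hs.1, hs.2.trans htxd⟩
  calc t + d - ε ≤ t + (d - ε) := add_tsub_le_assoc
    _ < t + x := add_lt_add_right hεx t

lemma nsat_until_of_mem_UP_three (hI : I.OrdConnected) (ht : t ∈ UP f φ1 φ2 r w I 3) :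
    NSat (shift f t) (.until_ φ1 φ2 I) := by
  obtain ⟨⟨-, ε, hε, h1, h2⟩, hrt, d, hd, rfl⟩ := ht
  obtain ⟨x, hxI, hdx, hxε⟩ :=
    exists_mem_Ioo_of_mem_openRCloseL hI hd (lt_add_of_pos_right d hε)
  have htxε : t + x < t + d + ε := by rw [add_assoc]; exact add_lt_add_right hxε t
  exact nsat_shift_until_of_witness hxI (h2 _ ⟨add_lt_add_right hdx t, htxε⟩) fun s hs =>
    h1 s ⟨hrt.trans_lt hs.1, hs.2.trans htxε⟩

end UntilProofSets

theorem until_proofset_sound_general (f : Signal AP) (φ1 φ2 : MTL AP) (r w : ℝ≥0)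
    (I : Set ℝ≥0) (hI : I.OrdConnected) (i : ℕ)
    (t : ℝ≥0) (ht : t ∈ UP f φ1 φ2 r w I i) :
    NSat (shift f t) (.until_ φ1 φ2 I) := by
  match i, ht with
  | 1, ht => exact nsat_until_of_mem_UP_one ht
  | 2, ht => exact nsat_until_of_mem_UP_two hI ht
  | 3, ht => exact nsat_until_of_mem_UP_three hI ht
  | 0, ht | n + 4, ht => exact ht.elim

theorem until_proofset_sound (f : Signal AP) (φ1 φ2 : MTL AP) (r w : ℝ≥0)
    (I : Set ℝ≥0) (hI : I.OrdConnected) (i : ℕ) (hi : i ∈ ({1, 2, 3} : Set ℕ))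
    (t : ℝ≥0) (ht : t ∈ UP f φ1 φ2 r w I i) :
    NSat (shift f t) (.until_ φ1 φ2 I) :=
  until_proofset_sound_general f φ1 φ2 r w I hI i t ht

end MITL
end
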